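/- Let Γ be a finite simplicial graph focused at a vertex c with trivial graph automorphism group, with dominated vertices labeled x_1, …, x_l (dominated by but not adjacent to c) and x_{l+1}, …, x_m (dominated by and adjacent to c), and components P_1, …, P_k of the induced subgraph on V \ st(c) with P_i = {x_i} for i ≤ l. Writing τ̄_i and χ̄_j for the images in Out(A_Γ) of τ_{c x_i} and χ_{c,P_j}, and ῑ_v for the image of the inversion ι_v, the following relations hold in Out(A_Γ): (1) ῑ_c χ̄_j ῑ_c = χ̄_j⁻¹ for 1 ≤ j ≤ k−1; (2) ῑ_c τ̄_i ῑ_c = τ̄_i⁻¹ for 1 ≤ i ≤ m; (3) ῑ_r χ̄_j ῑ_r = χ̄_j for 1 ≤ j ≤ k−1 and every vertex r ≠ c; (4) ῑ_r τ̄_i ῑ_r = τ̄_i for 1 ≤ i ≤ m and every vertex r ∉ {c, x_i}; (5) ῑ_{x_i} τ̄_i ῑ_{x_i} = χ̄_i · τ̄_i⁻¹ for 1 ≤ i ≤ l; (6) ῑ_{x_i} τ̄_i ῑ_{x_i} = τ̄_i⁻¹ for l+1 ≤ i ≤ m. -/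

import Mathlib

noncomputable section

/-- The subgroup of inner automorphisms inside `MulAut G`. -/
def Inn (G : Type) [Group G] : Subgroup (MulAut G) :=
  (MulAut.conj : G →* MulAut G).range

instance Inn.normal (G : Type) [Group G] : (Inn G).Normal := by
  constructor
  rintro x ⟨g, rfl⟩ φ
  refine ⟨φ g, ?_⟩
  ext h
  simp [MulAut.mul_apply, MulAut.conj_apply, map_mul, map_inv]

/-- The outer automorphism group of `G`. -/
abbrev Out (G : Type) [Group G] := MulAut G ⧸ Inn G

/-- The set of commutator relators defining the RAAG of a graph. -/
def raagRels {V : Type} (G : SimpleGraph V) : Set (FreeGroup V) :=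
  {r | ∃ u v : V, G.Adj u v ∧
    r = FreeGroup.of u * FreeGroup.of v * (FreeGroup.of u)⁻¹ * (FreeGroup.of v)⁻¹}

/-- The right-angled Artin group of a graph. -/
abbrev RAAG {V : Type} (G : SimpleGraph V) := PresentedGroup (raagRels G)

/-- The standard generator of `RAAG G` corresponding to a vertex. -/
def gen {V : Type} (G : SimpleGraph V) (v : V) : RAAG G := PresentedGroup.of v

/-- The star of a vertex: the vertex together with its neighbours. -/
def star {V : Type} (G : SimpleGraph V) (v : V) : Set V := insert v (G.neighborSet v)

/-- `u` dominates `v` if `lk(v) ⊆ st(u)`. -/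
def Dominates {V : Type} (G : SimpleGraph V) (u v : V) : Prop :=
  G.neighborSet v ⊆ star G u

/-- A graph has trivial automorphism group. -/
def TrivialAut {V : Type} (G : SimpleGraph V) : Prop := ∀ e : G ≃g G, ∀ v, e v = v

/-- A graph is focused at a vertex `c`. -/
def Focused {V : Type} (G : SimpleGraph V) (c : V) : Prop :=
  (∀ u v : V, u ≠ v → Dominates G u v → u = c) ∧
  ∀ v : V, v ≠ c → (G.induce (star G v)ᶜ).Connected

/-- A graph is austere. -/
def Austere {V : Type} (G : SimpleGraph V) : Prop :=
  TrivialAut G ∧ (∀ u v : V, u ≠ v → ¬Dominates G u v) ∧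
  ∀ v : V, (G.induce (star G v)ᶜ).Connected

/-- `P` is (the vertex set of) a connected component of the induced subgraph on `s`. -/
def IsCompOf {V : Type} (G : SimpleGraph V) (s : Set V) (P : Set V) : Prop :=
  ∃ x : s, P = Subtype.val '' {y : s | (G.induce s).Reachable x y}

/-- `φ` is the inversion at the vertex `v`. -/
def IsInversion {V : Type} (G : SimpleGraph V) (φ : MulAut (RAAG G)) (v : V) : Prop :=
  φ (gen G v) = (gen G v)⁻¹ ∧ ∀ w : V, w ≠ v → φ (gen G w) = gen G w

/-- `φ` is the transvection `τ_{uv}` (`v ↦ uv`). -/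
def IsTransvection {V : Type} (G : SimpleGraph V) (φ : MulAut (RAAG G)) (u v : V) : Prop :=
  u ≠ v ∧ Dominates G u v ∧ φ (gen G v) = gen G u * gen G v ∧
    ∀ w : V, w ≠ v → φ (gen G w) = gen G w

/-- `φ` is the partial conjugation `χ_{v,P}`. -/
def IsPartialConj {V : Type} (G : SimpleGraph V) (φ : MulAut (RAAG G)) (v : V) (P : Set V) :
    Prop :=
  IsCompOf G (star G v)ᶜ P ∧ (∀ u ∈ P, φ (gen G u) = gen G v * gen G u * (gen G v)⁻¹) ∧
    ∀ w : V, w ∉ P → φ (gen G w) = gen G w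

/-- The subgroup `I_Γ` of `Aut(A_Γ)` generated by the inversions. -/
def InvSubgroup {V : Type} (G : SimpleGraph V) : Subgroup (MulAut (RAAG G)) :=
  Subgroup.closure {φ | ∃ v, IsInversion G φ v}

/-- The subgroup `PCT` of `Aut(A_Γ)` generated by transvections and partial conjugations. -/
def PCT {V : Type} (G : SimpleGraph V) : Subgroup (MulAut (RAAG G)) :=
  Subgroup.closure {φ | (∃ u v, IsTransvection G φ u v) ∨ ∃ v P, IsPartialConj G φ v P}

/-- The number `l` of vertices dominated by but not adjacent to `c`. -/
def lInv {V : Type} (G : SimpleGraph V) (c : V) : ℕ :=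
  Nat.card {v : V | v ≠ c ∧ Dominates G c v ∧ ¬G.Adj c v}

/-- The number `m` of vertices (other than `c`) dominated by `c`. -/
def mInv {V : Type} (G : SimpleGraph V) (c : V) : ℕ :=
  Nat.card {v : V | v ≠ c ∧ Dominates G c v}

/-- The number `k` of connected components of `Γ \ st(c)`. -/
def kInv {V : Type} (G : SimpleGraph V) (c : V) : ℕ :=
  Nat.card ((G.induce (star G c)ᶜ).ConnectedComponent)

/-- `GL_n(ℤ)`. -/
abbrev GLZ (n : ℕ) := Matrix.GeneralLinearGroup (Fin n) ℤ

/-- `PGL_n(ℤ)`, the quotient of `GL_n(ℤ)` by its centre `{±I}`. -/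
abbrev PGLZ (n : ℕ) := GLZ n ⧸ Subgroup.center (GLZ n)

/-- The principal level 2 congruence subgroup `Λ_l[2]` of `GL_l(ℤ)`. -/
def congr2 (l : ℕ) : Subgroup (GLZ l) :=
  (Matrix.GeneralLinearGroup.map (Int.castRingHom (ZMod 2)) :
    GLZ l →* Matrix.GeneralLinearGroup (Fin l) (ZMod 2)).ker

/-- The matrix `(1 1 / 0 -1)`. -/
def Bmat : Matrix (Fin 2) (Fin 2) ℤ := !![1, 1; 0, -1]

/-- A block-diagonal `2l × 2l` matrix whose `i`th `2 × 2` diagonal block is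
`Bmat` if `ε i` and the identity otherwise. -/
def Lmat (l : ℕ) (ε : Fin l → Bool) : Matrix (Fin l × Fin 2) (Fin l × Fin 2) ℤ :=
  fun a b =>
    if a.1 = b.1 then (if ε a.1 then Bmat a.2 b.2 else (1 : Matrix (Fin 2) (Fin 2) ℤ) a.2 b.2)
    else 0

/-- `GL_{2l}(ℤ)`, with rows and columns indexed by `Fin l × Fin 2`. -/
abbrev GL2l (l : ℕ) := Matrix.GeneralLinearGroup (Fin l × Fin 2) ℤ

/-- The subgroup `𝓛 ≤ GL_{2l}(ℤ)`. -/
def scriptL (l : ℕ) : Subgroup (GL2l l) :=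
  Subgroup.closure {M : GL2l l |
    ∃ ε : Fin l → Bool, (M : Matrix (Fin l × Fin 2) (Fin l × Fin 2) ℤ) = Lmat l ε}

/-- The index type realizing the block decomposition `d = 2l + p + q`. -/
abbrev BIdx (l p q : ℕ) := (Fin l × Fin 2) ⊕ (Fin p ⊕ Fin q)

/-- The block-diagonal matrix `Diag(D₁, D₂, ε·I_q)` with `D₁ ∈ 𝓛` given by `ε1`,
`D₂` diagonal with entries `d2`, and `ε = e`. -/
def Dmat (l p q : ℕ) (ε1 : Fin l → Bool) (d2 : Fin p → ℤˣ) (e : ℤˣ) :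
    Matrix (BIdx l p q) (BIdx l p q) ℤ := fun a b =>
  match a, b with
  | Sum.inl a, Sum.inl b => Lmat l ε1 a b
  | Sum.inr (Sum.inl i), Sum.inr (Sum.inl j) => if i = j then (d2 i : ℤ) else 0
  | Sum.inr (Sum.inr i), Sum.inr (Sum.inr j) => if i = j then (e : ℤ) else 0
  | _, _ => 0

/-- The subgroup `D ≤ GL_d(ℤ)` generated by `−I_d` and the block-diagonal matrices
`Diag(D₁, D₂, ε·I_q)`. -/
def DSub (l p q : ℕ) : Subgroup (Matrix.GeneralLinearGroup (BIdx l p q) ℤ) :=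
  Subgroup.closure
    ({M | (M : Matrix (BIdx l p q) (BIdx l p q) ℤ) = -1} ∪
     {M | ∃ ε1 d2 e, (M : Matrix (BIdx l p q) (BIdx l p q) ℤ) = Dmat l p q ε1 d2 e})

/-!
All six relations already hold in `Aut(A_Γ)`, and an automorphism of `A_Γ` is determined by
the images of the standard generators, so each is a check on generators. The only check that
is not immediate is at `x = x_i` in (5) and (6): `ι_x τ_i ι_x` sends `x ↦ x c⁻¹`, which is what
`χ_{c,{x}} τ_i⁻¹` does when `{x}` is a component of `Γ ∖ st(c)`, and which equals
`τ_i⁻¹ x = c⁻¹ x` when `c` and `x` commute.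
-/

section

variable {V : Type} {G : SimpleGraph V}

theorem RAAG.mulAut_ext {f g : MulAut (RAAG G)} (h : ∀ v, f (gen G v) = g (gen G v)) :
    f = g := by
  apply MulEquiv.toMonoidHom_injective
  apply MonoidHom.eq_of_eqOn_dense (PresentedGroup.closure_range_of (raagRels G))
  rintro _ ⟨v, rfl⟩
  exact h v

theorem gen_mul_comm_of_adj {u v : V} (h : G.Adj u v) :
    gen G u * gen G v = gen G v * gen G u := by
  rw [← commutatorElement_eq_one_iff_mul_comm, commutatorElement_def]
  exact (QuotientGroup.eq_one_iff _).mpr (Subgroup.subset_normalClosure ⟨u, v, h, rfl⟩)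

theorem IsCompOf.subset {s P : Set V} (h : IsCompOf G s P) : P ⊆ s := by
  obtain ⟨_, rfl⟩ := h
  rintro _ ⟨y, -, rfl⟩
  exact y.2

theorem IsPartialConj.notMem {χ : MulAut (RAAG G)} {v : V} {P : Set V}
    (h : IsPartialConj G χ v P) : v ∉ P :=
  fun hv => h.1.subset hv (Set.mem_insert v _)

namespace IsInversion

variable {ι φ : MulAut (RAAG G)} {u v r : V}

theorem mul_partialConj_mul_eq_inv {P : Set V} (hι : IsInversion G ι v)
    (hχ : IsPartialConj G φ v P) : ι * φ * ι = φ⁻¹ := by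
  rw [← mul_eq_one_iff_eq_inv]
  refine RAAG.mulAut_ext fun w => ?_
  have hvP := hχ.notMem
  simp only [MulAut.mul_apply, MulAut.one_apply]
  by_cases hw : w ∈ P
  · have hwv : w ≠ v := ne_of_mem_of_not_mem hw hvP
    simp [hχ.2.1 w hw, hι.2 w hwv, hχ.2.2 v hvP, hι.1, mul_assoc]
  · rcases eq_or_ne w v with rfl | hwv
    · simp [hχ.2.2 w hvP, hι.1]
    · simp [hχ.2.2 w hw, hι.2 w hwv]

theorem mul_transvection_mul_eq_inv (hι : IsInversion G ι u)
    (hτ : IsTransvection G φ u v) : ι * φ * ι = φ⁻¹ := by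
  rw [← mul_eq_one_iff_eq_inv]
  refine RAAG.mulAut_ext fun w => ?_
  have huv := hτ.1
  simp only [MulAut.mul_apply, MulAut.one_apply]
  rcases eq_or_ne w v with rfl | hwv
  · simp [hτ.2.2.1, hι.2 w huv.symm, hι.1, hτ.2.2.2 u huv]
  · rcases eq_or_ne w u with rfl | hwu
    · simp [hτ.2.2.2 w hwv, hι.1]
    · simp [hτ.2.2.2 w hwv, hι.2 w hwu]

theorem mul_partialConj_mul_of_ne {P : Set V} (hι : IsInversion G ι r)
    (hχ : IsPartialConj G φ v P) (hrv : r ≠ v) : ι * φ * ι = φ := by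
  refine RAAG.mulAut_ext fun w => ?_
  simp only [MulAut.mul_apply]
  have hφ (w : V) :
      φ (gen G w) = gen G v * gen G w * (gen G v)⁻¹ ∨ φ (gen G w) = gen G w := by
    by_cases hw : w ∈ P
    · exact .inl (hχ.2.1 w hw)
    · exact .inr (hχ.2.2 w hw)
  rcases eq_or_ne w r with rfl | hwr
  · rcases hφ w with h | h <;> simp [hι.1, h, hι.2 v hrv.symm, mul_assoc]
  · rcases hφ w with h | h <;> simp [hι.2 w hwr, h, hι.2 v hrv.symm]

theorem mul_transvection_mul_of_ne (hι : IsInversion G ι r)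
    (hτ : IsTransvection G φ u v) (hru : r ≠ u) (hrv : r ≠ v) : ι * φ * ι = φ := by
  refine RAAG.mulAut_ext fun w => ?_
  simp only [MulAut.mul_apply]
  rcases eq_or_ne w r with rfl | hwr
  · simp [hι.1, hτ.2.2.2 w hrv]
  · rcases eq_or_ne w v with rfl | hwv
    · simp [hι.2 w hwr, hτ.2.2.1, hι.2 u hru.symm]
    · simp [hι.2 w hwr, hτ.2.2.2 w hwv]

theorem mul_transvection_mul_eq_partialConj_mul_inv {χ : MulAut (RAAG G)}
    (hι : IsInversion G ι v) (hτ : IsTransvection G φ u v) (hχ : IsPartialConj G χ u {v}) :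
    ι * φ * ι = χ * φ⁻¹ := by
  rw [← mul_inv_eq_iff_eq_mul, inv_inv]
  refine RAAG.mulAut_ext fun w => ?_
  have huv := hτ.1
  simp only [MulAut.mul_apply]
  rcases eq_or_ne w v with rfl | hwv
  · simp [hτ.2.2.1, hι.2 u huv, hι.1, hτ.2.2.2 u huv, hχ.2.1 w rfl, mul_assoc]
  · simp [hτ.2.2.2 w hwv, hι.2 w hwv, hχ.2.2 w hwv]

theorem mul_transvection_mul_eq_inv_of_adj (hι : IsInversion G ι v)
    (hτ : IsTransvection G φ u v) (hadj : G.Adj u v) : ι * φ * ι = φ⁻¹ := by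
  rw [← mul_eq_one_iff_eq_inv]
  refine RAAG.mulAut_ext fun w => ?_
  have huv := hτ.1
  simp only [MulAut.mul_apply, MulAut.one_apply]
  rcases eq_or_ne w v with rfl | hwv
  · simp only [hτ.2.2.1, map_mul, map_inv, hι.2 u huv, hι.1, hτ.2.2.2 u huv, mul_inv_rev,
      inv_inv]
    rw [← mul_assoc, gen_mul_comm_of_adj hadj, mul_inv_cancel_right]
  · simp [hτ.2.2.2 w hwv, hι.2 w hwv]

end IsInversion

end

theorem stmt17_general {V : Type} (G : SimpleGraph V) (c : V)
    (l m k : ℕ) (hlm : l ≤ m) (hlk : l ≤ k)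
    (x : Fin m → V)
    (hxl : ∀ i : Fin m, (i : ℕ) < l ↔ ¬G.Adj c (x i))
    (P : Fin k → Set V)
    (hPl : ∀ (j : Fin k) (hj : (j : ℕ) < l), P j = {x ⟨j, lt_of_lt_of_le hj hlm⟩})
    (τ : Fin m → MulAut (RAAG G)) (hτ : ∀ i, IsTransvection G (τ i) c (x i))
    (χ : Fin k → MulAut (RAAG G)) (hχ : ∀ j, IsPartialConj G (χ j) c (P j))
    (ι : V → MulAut (RAAG G)) (hι : ∀ w : V, IsInversion G (ι w) w) :
    -- (1)
    (∀ j : Fin k, (j : ℕ) + 1 < k →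
      QuotientGroup.mk' (Inn (RAAG G)) (ι c) * QuotientGroup.mk' (Inn (RAAG G)) (χ j) *
          QuotientGroup.mk' (Inn (RAAG G)) (ι c) =
        (QuotientGroup.mk' (Inn (RAAG G)) (χ j))⁻¹) ∧
    -- (2)
    (∀ i : Fin m,
      QuotientGroup.mk' (Inn (RAAG G)) (ι c) * QuotientGroup.mk' (Inn (RAAG G)) (τ i) *
          QuotientGroup.mk' (Inn (RAAG G)) (ι c) =
        (QuotientGroup.mk' (Inn (RAAG G)) (τ i))⁻¹) ∧
    -- (3)
    (∀ j : Fin k, (j : ℕ) + 1 < k → ∀ r : V, r ≠ c →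
      QuotientGroup.mk' (Inn (RAAG G)) (ι r) * QuotientGroup.mk' (Inn (RAAG G)) (χ j) *
          QuotientGroup.mk' (Inn (RAAG G)) (ι r) =
        QuotientGroup.mk' (Inn (RAAG G)) (χ j)) ∧
    -- (4)
    (∀ i : Fin m, ∀ r : V, r ≠ c → r ≠ x i →
      QuotientGroup.mk' (Inn (RAAG G)) (ι r) * QuotientGroup.mk' (Inn (RAAG G)) (τ i) *
          QuotientGroup.mk' (Inn (RAAG G)) (ι r) =
        QuotientGroup.mk' (Inn (RAAG G)) (τ i)) ∧
    -- (5)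
    (∀ (i : Fin m) (hi : (i : ℕ) < l),
      QuotientGroup.mk' (Inn (RAAG G)) (ι (x i)) * QuotientGroup.mk' (Inn (RAAG G)) (τ i) *
          QuotientGroup.mk' (Inn (RAAG G)) (ι (x i)) =
        QuotientGroup.mk' (Inn (RAAG G)) (χ ⟨(i : ℕ), lt_of_lt_of_le hi hlk⟩) *
          (QuotientGroup.mk' (Inn (RAAG G)) (τ i))⁻¹) ∧
    -- (6)
    (∀ i : Fin m, l ≤ (i : ℕ) →
      QuotientGroup.mk' (Inn (RAAG G)) (ι (x i)) * QuotientGroup.mk' (Inn (RAAG G)) (τ i) *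
          QuotientGroup.mk' (Inn (RAAG G)) (ι (x i)) =
        (QuotientGroup.mk' (Inn (RAAG G)) (τ i))⁻¹) := by
  set π := QuotientGroup.mk' (Inn (RAAG G))
  have descend {a b d : MulAut (RAAG G)} (h : a * b * a = d) : π a * π b * π a = π d := by
    rw [← map_mul, ← map_mul, h]
  refine ⟨fun j _ => ?_, fun i => ?_, fun j _ r hrc => ?_, fun i r hrc hrx => ?_,
    fun i hi => ?_, fun i hli => ?_⟩
  · rw [descend ((hι c).mul_partialConj_mul_eq_inv (hχ j)), map_inv]
  · rw [descend ((hι c).mul_transvection_mul_eq_inv (hτ i)), map_inv]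
  · exact descend ((hι r).mul_partialConj_mul_of_ne (hχ j) hrc)
  · exact descend ((hι r).mul_transvection_mul_of_ne (hτ i) hrc hrx)
  · have hχi : IsPartialConj G (χ _) c {x i} := hPl ⟨i, lt_of_lt_of_le hi hlk⟩ hi ▸ hχ _
    rw [descend ((hι (x i)).mul_transvection_mul_eq_partialConj_mul_inv (hτ i) hχi), map_mul,
      map_inv]
  · have hadj : G.Adj c (x i) := not_not.mp ((hxl i).not.mp (not_lt.mpr hli))
    rw [descend ((hι (x i)).mul_transvection_mul_eq_inv_of_adj (hτ i) hadj), map_inv]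

/-- The relations (1)–(6) describing the action of the inversions on the images of the
transvections and partial conjugations in `Out(A_Γ)`, for a focused graph. -/
theorem stmt17 {V : Type} [Fintype V] (G : SimpleGraph V) (c : V)
    (hF : Focused G c) (hT : TrivialAut G)
    (l m k : ℕ) (hlm : l ≤ m) (hlk : l ≤ k)
    (x : Fin m → V) (hxinj : Function.Injective x)
    (hx : ∀ v : V, (v ≠ c ∧ Dominates G c v) ↔ ∃ i, x i = v)
    (hxl : ∀ i : Fin m, (i : ℕ) < l ↔ ¬G.Adj c (x i))
    (P : Fin k → Set V) (hPinj : Function.Injective P)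
    (hP : ∀ Q : Set V, IsCompOf G (star G c)ᶜ Q ↔ ∃ j, P j = Q)
    (hPl : ∀ (j : Fin k) (hj : (j : ℕ) < l), P j = {x ⟨j, lt_of_lt_of_le hj hlm⟩})
    (τ : Fin m → MulAut (RAAG G)) (hτ : ∀ i, IsTransvection G (τ i) c (x i))
    (χ : Fin k → MulAut (RAAG G)) (hχ : ∀ j, IsPartialConj G (χ j) c (P j))
    (ι : V → MulAut (RAAG G)) (hι : ∀ w : V, IsInversion G (ι w) w) :
    -- (1)
    (∀ j : Fin k, (j : ℕ) + 1 < k →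
      QuotientGroup.mk' (Inn (RAAG G)) (ι c) * QuotientGroup.mk' (Inn (RAAG G)) (χ j) *
          QuotientGroup.mk' (Inn (RAAG G)) (ι c) =
        (QuotientGroup.mk' (Inn (RAAG G)) (χ j))⁻¹) ∧
    -- (2)
    (∀ i : Fin m,
      QuotientGroup.mk' (Inn (RAAG G)) (ι c) * QuotientGroup.mk' (Inn (RAAG G)) (τ i) *
          QuotientGroup.mk' (Inn (RAAG G)) (ι c) =
        (QuotientGroup.mk' (Inn (RAAG G)) (τ i))⁻¹) ∧
    -- (3)
    (∀ j : Fin k, (j : ℕ) + 1 < k → ∀ r : V, r ≠ c →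
      QuotientGroup.mk' (Inn (RAAG G)) (ι r) * QuotientGroup.mk' (Inn (RAAG G)) (χ j) *
          QuotientGroup.mk' (Inn (RAAG G)) (ι r) =
        QuotientGroup.mk' (Inn (RAAG G)) (χ j)) ∧
    -- (4)
    (∀ i : Fin m, ∀ r : V, r ≠ c → r ≠ x i →
      QuotientGroup.mk' (Inn (RAAG G)) (ι r) * QuotientGroup.mk' (Inn (RAAG G)) (τ i) *
          QuotientGroup.mk' (Inn (RAAG G)) (ι r) =
        QuotientGroup.mk' (Inn (RAAG G)) (τ i)) ∧
    -- (5)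
    (∀ (i : Fin m) (hi : (i : ℕ) < l),
      QuotientGroup.mk' (Inn (RAAG G)) (ι (x i)) * QuotientGroup.mk' (Inn (RAAG G)) (τ i) *
          QuotientGroup.mk' (Inn (RAAG G)) (ι (x i)) =
        QuotientGroup.mk' (Inn (RAAG G)) (χ ⟨(i : ℕ), lt_of_lt_of_le hi hlk⟩) *
          (QuotientGroup.mk' (Inn (RAAG G)) (τ i))⁻¹) ∧
    -- (6)
    (∀ i : Fin m, l ≤ (i : ℕ) →
      QuotientGroup.mk' (Inn (RAAG G)) (ι (x i)) * QuotientGroup.mk' (Inn (RAAG G)) (τ i) *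
          QuotientGroup.mk' (Inn (RAAG G)) (ι (x i)) =
        (QuotientGroup.mk' (Inn (RAAG G)) (τ i))⁻¹) :=
  stmt17_general G c l m k hlm hlk x hxl P hPl τ hτ χ hχ ι hι
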